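/- Let [X_{n,j}]_{n≥1, j=1,…,M} be an array of random variables with values in a Polish space that is partially exchangeable in the sense of de Finetti, with law P and directing random measures (F̃_1,…,F̃_M). Fix j and let V = (X_{n,i})_{n≥1, i≠j} collect all observations from the other sequences. Then, with P-probability one, as n→∞ the conditional distribution P(X_{n+1,j} ∈ · | X_{1,j},…,X_{n,j}, V) converges weakly to F̃_j(·), and also P(X_{n+1,j} ∈ · | (X_{k,i})_{k≤n, i=1,…,M}) converges weakly to F̃_j(·). -/

import Mathlib

/-!
Fix a bounded continuous `f` and column `j`, and let `ℱ n` be either of the two σ-fields of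
observations. Swapping `X_{n,j}` with a later `X_{n+i,j}` fixes every coordinate that generates
`ℱ n`, so partial exchangeability gives `E[f(X_{n+i,j}) | ℱ n] = E[f(X_{n,j}) | ℱ n]`. Averaging
over `i` and letting the number of terms grow, the Cesàro means of `f(X_{n+i,j})` tend to
`L = ∫ f dF̃_j`, so conditional dominated convergence yields `E[f(X_{n,j}) | ℱ n] = E[L | ℱ n]`.
Being an a.s. limit of `⨆ n, ℱ n`-measurable means, `L` is a.s. equal to a `⨆ n, ℱ n`-measurable
function, so Lévy's upward theorem gives `E[L | ℱ n] → L` a.s.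
-/

open MeasureTheory ProbabilityTheory Filter Topology
open scoped ENNReal NNReal

/-- A family of sequences `[X_{n,j}]` (columns indexed by `J`) is partially exchangeable in the
sense of de Finetti if its joint law is invariant under separate finite permutations within each
column. -/
def PartiallyExchangeable {Ω 𝕏 J : Type*} [MeasurableSpace Ω] [MeasurableSpace 𝕏]
    (μ : Measure Ω) (X : ℕ → J → Ω → 𝕏) : Prop :=
  ∀ σ : J → Equiv.Perm ℕ, (∀ j, {n | σ j n ≠ n}.Finite) →
    Measure.map (fun ω (p : ℕ × J) => X (σ p.2 p.1) p.2 ω) μ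
      = Measure.map (fun ω (p : ℕ × J) => X p.1 p.2 ω) μ

/-- The empirical distribution `F̂_n = (1/n) ∑_{i=1}^n δ_{X_i}`. -/
noncomputable def empMeas {Ω 𝕏 : Type*} [MeasurableSpace Ω] [MeasurableSpace 𝕏]
    (X : ℕ → Ω → 𝕏) (n : ℕ) (ω : Ω) : Measure 𝕏 :=
  (n : ℝ≥0∞)⁻¹ • ∑ i ∈ Finset.range n, Measure.dirac (X i ω)

/-- Weak convergence of a sequence of measures, phrased via integrals of bounded continuous
functions. -/
def TendstoWeakly {𝕏 : Type*} [MeasurableSpace 𝕏] [TopologicalSpace 𝕏]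
    (ν : ℕ → Measure 𝕏) (ρ : Measure 𝕏) : Prop :=
  ∀ f : BoundedContinuousFunction 𝕏 ℝ,
    Tendsto (fun n => ∫ x, f x ∂(ν n)) atTop (𝓝 (∫ x, f x ∂ρ))

open scoped BoundedContinuousFunction

noncomputable def cesaroMean (a : ℕ → ℝ) (k : ℕ) : ℝ :=
  (k : ℝ)⁻¹ * ∑ i ∈ Finset.range k, a i

lemma norm_cesaroMean_le {a : ℕ → ℝ} {C : ℝ} (ha : ∀ i, ‖a i‖ ≤ C) {k : ℕ} (hk : k ≠ 0) :
    ‖cesaroMean a k‖ ≤ C := by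
  have hsum : ‖∑ i ∈ Finset.range k, a i‖ ≤ k * C :=
    (norm_sum_le _ _).trans
      ((Finset.sum_le_sum fun i (_ : i ∈ Finset.range k) => ha i).trans_eq (by simp))
  rw [cesaroMean, norm_mul, norm_inv, Real.norm_natCast,
    inv_mul_le_iff₀ (by positivity)]
  exact hsum

lemma tendsto_cesaroMean_comp_add {a : ℕ → ℝ} {L : ℝ}
    (h : Tendsto (cesaroMean a) atTop (𝓝 L)) (n : ℕ) :
    Tendsto (cesaroMean fun i => a (n + i)) atTop (𝓝 L) := by
  set S := ∑ i ∈ Finset.range n, a i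
  have hinv : Tendsto (fun k : ℕ => (k : ℝ)⁻¹) atTop (𝓝 0) := tendsto_inv_atTop_nhds_zero_nat
  -- `∑_{i<k} a (n + i) = (k + n) * cesaroMean a (k + n) - S`
  have hlim : Tendsto (fun k : ℕ => ((n : ℝ) * (k : ℝ)⁻¹ + 1) * cesaroMean a (k + n)
      - (k : ℝ)⁻¹ * S) atTop (𝓝 ((n * 0 + 1) * L - 0 * S)) :=
    (((hinv.const_mul _).add_const 1).mul (h.comp (tendsto_add_atTop_nat n))).sub
      (hinv.mul_const _)
  simp only [mul_zero, zero_add, one_mul, zero_mul, sub_zero] at hlim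
  refine hlim.congr' ?_
  filter_upwards [eventually_ne_atTop 0] with k hk
  replace hk : (k : ℝ) ≠ 0 := Nat.cast_ne_zero.2 hk
  have hfac : ((n : ℝ) * (k : ℝ)⁻¹ + 1) * ((k + n : ℕ) : ℝ)⁻¹ = (k : ℝ)⁻¹ := by
    push_cast
    field_simp
    ring
  have hsplit : ∑ i ∈ Finset.range (k + n), a i = S + ∑ i ∈ Finset.range k, a (n + i) := by
    rw [add_comm k n, Finset.sum_range_add]
  rw [cesaroMean, cesaroMean, hsplit, ← mul_assoc, hfac]
  ring

lemma integral_empMeas {Ω 𝕏 : Type*} [MeasurableSpace Ω] [MeasurableSpace 𝕏]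
    [TopologicalSpace 𝕏] [OpensMeasurableSpace 𝕏] (Y : ℕ → Ω → 𝕏) (n : ℕ) (ω : Ω)
    (f : 𝕏 →ᵇ ℝ) :
    ∫ x, f x ∂(empMeas Y n ω) = cesaroMean (fun i => f (Y i ω)) n := by
  rw [empMeas, integral_smul_measure, integral_finsetSum_measure fun i _ => f.integrable _]
  simp only [ENNReal.toReal_inv, ENNReal.toReal_natCast, smul_eq_mul, cesaroMean]
  congr 1
  exact Finset.sum_congr rfl fun i _ => integral_dirac' _ _ f.continuous.stronglyMeasurable

section CondExp

variable {Ω : Type*} {m m₀ : MeasurableSpace Ω} {μ : Measure Ω}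

lemma condExp_cesaroMean_ae_eq {b : ℕ → Ω → ℝ} (hb : ∀ i, Integrable (b i) μ)
    (hcond : ∀ i, μ[b i | m] =ᵐ[μ] μ[b 0 | m]) (k : ℕ) :
    μ[fun ω => cesaroMean (fun i => b i ω) (k + 1) | m] =ᵐ[μ] μ[b 0 | m] := by
  have hfun : (fun ω => cesaroMean (fun i => b i ω) (k + 1))
      = ((k + 1 : ℕ) : ℝ)⁻¹ • ∑ i ∈ Finset.range (k + 1), b i := by
    ext ω
    simp [cesaroMean]
  rw [hfun]
  refine (condExp_smul _ _ _).trans ?_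
  have hsum := (condExp_finsetSum (fun i _ => hb i) (m := m) (s := Finset.range (k + 1))).trans
    (eventuallyEq_sum fun i _ => hcond i)
  filter_upwards [hsum] with ω hω
  simp only [Pi.smul_apply, hω, Finset.sum_apply, Finset.sum_const, Finset.card_range,
    nsmul_eq_mul, smul_eq_mul]
  field_simp

lemma condExp_ae_eq_of_tendsto_cesaroMean [IsFiniteMeasure μ] {b : ℕ → Ω → ℝ} {C : ℝ}
    (hbm : ∀ i, AEStronglyMeasurable (b i) μ) (hbC : ∀ i ω, ‖b i ω‖ ≤ C)
    (hcond : ∀ i, μ[b i | m] =ᵐ[μ] μ[b 0 | m]) {L : Ω → ℝ}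
    (hL : ∀ᵐ ω ∂μ, Tendsto (cesaroMean fun i => b i ω) atTop (𝓝 (L ω))) :
    μ[L | m] =ᵐ[μ] μ[b 0 | m] := by
  have hb : ∀ i, Integrable (b i) μ := fun i => .of_bound (hbm i) C (ae_of_all _ (hbC i))
  refine tendsto_condExp_unique _ (fun _ => b 0) _ _ (fun k => ?_) (fun _ => hb 0)
    (hL.mono fun ω hω => hω.comp (tendsto_add_atTop_nat 1))
    (ae_of_all _ fun _ => tendsto_const_nhds) (fun _ => C) (integrable_const C) (fun _ => C)
    (integrable_const C)
    (fun k => ae_of_all _ fun ω => norm_cesaroMean_le (fun i => hbC i ω) k.succ_ne_zero)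
    (fun _ => ae_of_all _ (hbC 0)) (condExp_cesaroMean_ae_eq hb hcond)
  exact (integrable_finsetSum _ fun i _ => hb i).const_mul _

lemma ae_tendsto_condExp_of_tendsto_cesaroMean [IsFiniteMeasure μ] (ℱ : Filtration ℕ m₀)
    {b : ℕ → Ω → ℝ} {C : ℝ} (hb : ∀ n, StronglyMeasurable[ℱ (n + 1)] (b n))
    (hbC : ∀ n ω, ‖b n ω‖ ≤ C) (hcond : ∀ n i, μ[b (n + i) | ℱ n] =ᵐ[μ] μ[b n | ℱ n])
    {L : Ω → ℝ} (hL : ∀ᵐ ω ∂μ, Tendsto (cesaroMean fun i => b i ω) atTop (𝓝 (L ω))) :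
    ∀ᵐ ω ∂μ, Tendsto (fun n => μ[b n | ℱ n] ω) atTop (𝓝 (L ω)) := by
  have hmean : ∀ k, StronglyMeasurable[⨆ n, ℱ n] fun ω => cesaroMean (fun i => b i ω) k :=
    fun k => (Finset.stronglyMeasurable_fun_sum _ fun i _ =>
      (hb i).mono (le_iSup ℱ (i + 1))).const_mul _
  set g : Ω → ℝ := fun ω => limUnder atTop (cesaroMean fun i => b i ω)
  have hg : StronglyMeasurable[⨆ n, ℱ n] g :=
    @StronglyMeasurable.limUnder _ _ _ (⨆ n, ℱ n) _ _ _ _ _ _ _ hmean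
  have hLg : L =ᵐ[μ] g := hL.mono fun ω hω => hω.limUnder_eq.symm
  have hgC : ∀ᵐ ω ∂μ, ‖g ω‖ ≤ C := by
    filter_upwards [hL, hLg] with ω hω hgω
    rw [← hgω]
    exact le_of_tendsto (continuous_norm.tendsto _ |>.comp hω)
      ((eventually_ne_atTop 0).mono fun k hk => norm_cesaroMean_le (fun i => hbC i ω) hk)
  have hgint : Integrable g μ := .of_bound (hg.mono (iSup_le ℱ.le)).aestronglyMeasurable C hgC
  have hcondExp : ∀ n, μ[g | ℱ n] =ᵐ[μ] μ[b n | ℱ n] := fun n =>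
    (condExp_congr_ae hLg.symm).trans <| condExp_ae_eq_of_tendsto_cesaroMean
      (fun i => ((hb _).mono (ℱ.le _)).aestronglyMeasurable) (fun i => hbC _) (hcond n)
      (hL.mono fun ω hω => tendsto_cesaroMean_comp_add hω n)
  filter_upwards [ae_all_iff.2 hcondExp, hgint.tendsto_ae_condExp hg, hLg] with ω hcond_ω hlevy hgω
  rw [hgω]
  exact hlevy.congr fun n => hcond_ω n

end CondExp

lemma condExp_comap_ae_eq_of_identDistrib {Ω β γ : Type*} [MeasurableSpace Ω]
    [MeasurableSpace β] [MeasurableSpace γ] {μ : Measure Ω} [IsFiniteMeasure μ]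
    {Z : Ω → γ} {Y Y' : Ω → β} (hZ : Measurable Z)
    (h : IdentDistrib (fun ω => (Z ω, Y ω)) (fun ω => (Z ω, Y' ω)) μ μ)
    {g : β → ℝ} (hg : Measurable g) (hgY : Integrable (fun ω => g (Y ω)) μ) :
    μ[fun ω => g (Y ω) | MeasurableSpace.comap Z inferInstance]
      =ᵐ[μ] μ[fun ω => g (Y' ω) | MeasurableSpace.comap Z inferInstance] := by
  have hgY' : Integrable (fun ω => g (Y' ω)) μ :=
    (h.comp (hg.comp measurable_snd)).integrable_iff.1 hgY
  refine ae_eq_condExp_of_forall_setIntegral_eq hZ.comap_le hgY'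
    (fun s _ _ => integrable_condExp.integrableOn) ?_
    stronglyMeasurable_condExp.aestronglyMeasurable
  rintro _ ⟨B, hB, rfl⟩ -
  rw [setIntegral_condExp hZ.comap_le hgY ⟨B, hB, rfl⟩, ← integral_indicator (hZ hB),
    ← integral_indicator (hZ hB)]
  exact (h.comp ((hg.comp measurable_snd).indicator (measurable_fst hB))).integral_eq

lemma PartiallyExchangeable.condExp_ae_eq {Ω 𝕏 J γ : Type*} [MeasurableSpace Ω]
    [MeasurableSpace 𝕏] [MeasurableSpace γ] {μ : Measure Ω} [IsFiniteMeasure μ]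
    {X : ℕ → J → Ω → 𝕏} (hpe : PartiallyExchangeable μ X) (hX : ∀ n j, Measurable (X n j))
    {j : J} {n : ℕ} {Ψ : (ℕ × J → 𝕏) → γ} (hΨm : Measurable Ψ)
    (hΨ : ∀ x y : ℕ × J → 𝕏, (∀ k i, (i = j → k < n) → x (k, i) = y (k, i)) → Ψ x = Ψ y)
    {g : 𝕏 → ℝ} (hg : Measurable g) {m : ℕ} (hgX : Integrable (fun ω => g (X m j ω)) μ)
    (hnm : n ≤ m) :
    μ[fun ω => g (X m j ω) | MeasurableSpace.comap (fun ω => Ψ fun p => X p.1 p.2 ω) inferInstance]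
      =ᵐ[μ] μ[fun ω => g (X n j ω) |
        MeasurableSpace.comap (fun ω => Ψ fun p => X p.1 p.2 ω) inferInstance] := by
  classical
  set σ : J → Equiv.Perm ℕ := Function.update 1 j (Equiv.swap n m)
  have hσ : ∀ i, {k | σ i k ≠ k}.Finite := by
    intro i
    rcases eq_or_ne i j with rfl | hi
    · refine (Set.toFinite {n, m}).subset fun k hk => ?_
      by_contra hk'
      simp only [Set.mem_insert_iff, Set.mem_singleton_iff, not_or] at hk'
      exact hk (by simp [σ, Equiv.swap_apply_of_ne_of_ne hk'.1 hk'.2])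
    · simp [σ, hi]
  have hA : Measurable fun ω (p : ℕ × J) => X p.1 p.2 ω := measurable_pi_lambda _ fun p => hX _ _
  have hid : IdentDistrib (fun ω (p : ℕ × J) => X (σ p.2 p.1) p.2 ω)
      (fun ω (p : ℕ × J) => X p.1 p.2 ω) μ μ :=
    ⟨(measurable_pi_lambda _ fun p => hX _ _).aemeasurable, hA.aemeasurable, hpe σ hσ⟩
  have hfix : ∀ ω, (Ψ fun p => X (σ p.2 p.1) p.2 ω) = Ψ fun p => X p.1 p.2 ω := by
    refine fun ω => hΨ _ _ fun k i hk => ?_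
    rcases eq_or_ne i j with rfl | hi
    · have := hk rfl
      simp [σ, Equiv.swap_apply_of_ne_of_ne this.ne (this.trans_le hnm).ne]
    · simp [σ, hi]
  refine condExp_comap_ae_eq_of_identDistrib (hΨm.comp hA) ?_ hg hgX
  convert hid.comp (hΨm.prodMk (measurable_pi_apply (n, j))) using 1
  · ext ω : 1
    simp [σ, hfix]
  · rfl

section Observations

variable {Ω 𝕏 J : Type*} [MeasurableSpace Ω] [MeasurableSpace 𝕏] {X : ℕ → J → Ω → 𝕏}

def pastAndOtherColumns (hX : ∀ n j, Measurable (X n j)) (j : J) :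
    Filtration ℕ ‹MeasurableSpace Ω› where
  seq n := MeasurableSpace.comap (fun ω => ((fun i : Fin n => X i j ω),
    (fun p : ℕ × {i : J // i ≠ j} => X p.1 p.2 ω))) inferInstance
  mono' := monotone_nat_of_le_succ fun n => MeasurableSpace.comap_le_comap_of_eq_comp
    (fun q => ((fun i : Fin n => q.1 i.castSucc), q.2))
    (((measurable_pi_lambda _ fun _ => measurable_pi_apply _).comp measurable_fst).prodMk
      measurable_snd) rfl
  le' n := ((measurable_pi_lambda (fun ω (i : Fin n) => X i j ω) fun i => hX i j).prodMk
    (measurable_pi_lambda (fun ω (p : ℕ × {i : J // i ≠ j}) => X p.1 p.2 ω)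
      fun p => hX p.1 p.2)).comap_le

def pastAllColumns (hX : ∀ n j, Measurable (X n j)) : Filtration ℕ ‹MeasurableSpace Ω› where
  seq n := MeasurableSpace.comap (fun ω => fun p : Fin n × J => X p.1 p.2 ω) inferInstance
  mono' := monotone_nat_of_le_succ fun _ => MeasurableSpace.comap_le_comap_of_eq_comp
    (fun x p => x (p.1.castSucc, p.2)) (measurable_pi_lambda _ fun _ => measurable_pi_apply _) rfl
  le' n := (measurable_pi_lambda (fun ω (p : Fin n × J) => X p.1 p.2 ω)
    fun p => hX p.1 p.2).comap_le

variable (hX : ∀ n j, Measurable (X n j))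

lemma measurable_pastAndOtherColumns_succ (j : J) (n : ℕ) :
    Measurable[pastAndOtherColumns hX j (n + 1)] (X n j) :=
  .of_comap_le <| MeasurableSpace.comap_le_comap_of_eq_comp (fun q => q.1 (Fin.last n))
    ((measurable_pi_apply _).comp measurable_fst) rfl

lemma measurable_pastAllColumns_succ (j : J) (n : ℕ) :
    Measurable[pastAllColumns hX (n + 1)] (X n j) :=
  .of_comap_le <| MeasurableSpace.comap_le_comap_of_eq_comp (fun x => x (Fin.last n, j))
    (measurable_pi_apply _) rfl

variable [TopologicalSpace 𝕏] [OpensMeasurableSpace 𝕏] {μ : Measure Ω} [IsFiniteMeasure μ]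

lemma PartiallyExchangeable.condExp_pastAndOtherColumns_ae_eq (hpe : PartiallyExchangeable μ X)
    (f : 𝕏 →ᵇ ℝ) (j : J) (n i : ℕ) :
    μ[fun ω => f (X (n + i) j ω) | pastAndOtherColumns hX j n]
      =ᵐ[μ] μ[fun ω => f (X n j ω) | pastAndOtherColumns hX j n] :=
  hpe.condExp_ae_eq hX
    (Ψ := fun x => ((fun k : Fin n => x (k, j)), fun p : ℕ × {i : J // i ≠ j} => x (p.1, p.2)))
    ((measurable_pi_lambda _ fun _ => measurable_pi_apply _).prodMk
      (measurable_pi_lambda _ fun _ => measurable_pi_apply _))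
    (fun _ _ h => Prod.ext (funext fun k => h _ _ fun _ => k.isLt)
      (funext fun p => h _ _ fun hp => absurd hp p.2.2))
    f.continuous.measurable ((f.integrable _).comp_measurable (hX _ _)) (Nat.le_add_right n i)

lemma PartiallyExchangeable.condExp_pastAllColumns_ae_eq (hpe : PartiallyExchangeable μ X)
    (f : 𝕏 →ᵇ ℝ) (j : J) (n i : ℕ) :
    μ[fun ω => f (X (n + i) j ω) | pastAllColumns hX n]
      =ᵐ[μ] μ[fun ω => f (X n j ω) | pastAllColumns hX n] :=
  hpe.condExp_ae_eq hX (Ψ := fun x (p : Fin n × J) => x (p.1, p.2))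
    (measurable_pi_lambda _ fun _ => measurable_pi_apply _)
    (fun _ _ h => funext fun p => h _ _ fun _ => p.1.isLt)
    f.continuous.measurable ((f.integrable _).comp_measurable (hX _ _)) (Nat.le_add_right n i)

end Observations

theorem statement10_general
    {Ω 𝕏 J : Type*} [MeasurableSpace Ω] [MeasurableSpace 𝕏] [TopologicalSpace 𝕏]
    [BorelSpace 𝕏]
    (μ : Measure Ω) [IsProbabilityMeasure μ]
    (X : ℕ → J → Ω → 𝕏) (hX : ∀ n j, Measurable (X n j))
    (hpe : PartiallyExchangeable μ X)
    -- the directing random measures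
    (F : J → Ω → Measure 𝕏)
    (hFlim : ∀ᵐ ω ∂μ, ∀ j, TendstoWeakly (fun n => empMeas (fun i => X i j) n ω) (F j ω))
    (j : J)
    -- the σ-field generated by `X_{1,j},…,X_{n,j}` and all the other columns `V`
    (𝔊 : ℕ → MeasurableSpace Ω)
    (h𝔊 : ∀ n, 𝔊 n = MeasurableSpace.comap
      (fun ω => ((fun i : Fin n => X i j ω),
        (fun p : ℕ × {i : J // i ≠ j} => X p.1 p.2 ω))) inferInstance)
    -- the σ-field generated by all the observations `(X_{k,i})_{k ≤ n, i = 1,…,M}`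
    (ℌ : ℕ → MeasurableSpace Ω)
    (hℌ : ∀ n, ℌ n = MeasurableSpace.comap
      (fun ω => fun p : Fin n × J => X p.1 p.2 ω) inferInstance) :
    ∀ f : BoundedContinuousFunction 𝕏 ℝ,
      (∀ᵐ ω ∂μ,
        Tendsto (fun n => (μ[fun ω' => f (X n j ω') | 𝔊 n]) ω)
          atTop (𝓝 (∫ x, f x ∂(F j ω)))) ∧
      (∀ᵐ ω ∂μ,
        Tendsto (fun n => (μ[fun ω' => f (X n j ω') | ℌ n]) ω)
          atTop (𝓝 (∫ x, f x ∂(F j ω)))) := by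
  intro f
  have hL : ∀ᵐ ω ∂μ, Tendsto (cesaroMean fun i => f (X i j ω)) atTop (𝓝 (∫ x, f x ∂(F j ω))) := by
    filter_upwards [hFlim] with ω hω
    simpa only [integral_empMeas] using hω j f
  have hbound : ∀ n ω, ‖f (X n j ω)‖ ≤ ‖f‖ := fun _ _ => f.norm_coe_le_norm _
  obtain rfl : 𝔊 = pastAndOtherColumns hX j := funext h𝔊
  obtain rfl : ℌ = pastAllColumns hX := funext hℌ
  exact ⟨ae_tendsto_condExp_of_tendsto_cesaroMean _
      (fun n => (f.continuous.measurable.comp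
        (measurable_pastAndOtherColumns_succ hX j n)).stronglyMeasurable)
      hbound (hpe.condExp_pastAndOtherColumns_ae_eq hX f j) hL,
    ae_tendsto_condExp_of_tendsto_cesaroMean _
      (fun n => (f.continuous.measurable.comp
        (measurable_pastAllColumns_succ hX j n)).stronglyMeasurable)
      hbound (hpe.condExp_pastAllColumns_ae_eq hX f j) hL⟩

/-- **Predictive convergence for partially exchangeable arrays.**
For a partially exchangeable array with directing random measures `(F̃_j)`, the predictive
distribution of the next observation in column `j` — given the past observations in column `j`
together with all the observations `V` in the other columns, or given all the observations up to
time `n` in all columns — converges a.s. weakly to `F̃_j`. Conditional distributions are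
identified through conditional expectations of bounded continuous functions. -/
theorem statement10
    {Ω 𝕏 J : Type*} [MeasurableSpace Ω] [MeasurableSpace 𝕏] [TopologicalSpace 𝕏]
    [PolishSpace 𝕏] [BorelSpace 𝕏] [Countable J]
    (μ : Measure Ω) [IsProbabilityMeasure μ]
    (X : ℕ → J → Ω → 𝕏) (hX : ∀ n j, Measurable (X n j))
    (hpe : PartiallyExchangeable μ X)
    -- the directing random measures
    (F : J → Ω → Measure 𝕏)
    (hFmeas : ∀ j, Measurable (F j))
    (hFprob : ∀ j ω, IsProbabilityMeasure (F j ω))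
    (hFlim : ∀ᵐ ω ∂μ, ∀ j, TendstoWeakly (fun n => empMeas (fun i => X i j) n ω) (F j ω))
    (j : J)
    -- the σ-field generated by `X_{1,j},…,X_{n,j}` and all the other columns `V`
    (𝔊 : ℕ → MeasurableSpace Ω)
    (h𝔊 : ∀ n, 𝔊 n = MeasurableSpace.comap
      (fun ω => ((fun i : Fin n => X i j ω),
        (fun p : ℕ × {i : J // i ≠ j} => X p.1 p.2 ω))) inferInstance)
    -- the σ-field generated by all the observations `(X_{k,i})_{k ≤ n, i = 1,…,M}`
    (ℌ : ℕ → MeasurableSpace Ω)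
    (hℌ : ∀ n, ℌ n = MeasurableSpace.comap
      (fun ω => fun p : Fin n × J => X p.1 p.2 ω) inferInstance) :
    ∀ f : BoundedContinuousFunction 𝕏 ℝ,
      (∀ᵐ ω ∂μ,
        Tendsto (fun n => (μ[fun ω' => f (X n j ω') | 𝔊 n]) ω)
          atTop (𝓝 (∫ x, f x ∂(F j ω)))) ∧
      (∀ᵐ ω ∂μ,
        Tendsto (fun n => (μ[fun ω' => f (X n j ω') | ℌ n]) ω)
          atTop (𝓝 (∫ x, f x ∂(F j ω)))) :=
  statement10_general μ X hX hpe F hFlim j 𝔊 h𝔊 ℌ hℌ
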